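/- arXiv:1204.3249 — 2 statements merged into one kernel-verified Lean document; each statement's English description precedes it below -/
import Mathlib

section
/- Splitting bisimilarity is a congruence with respect to parallel composition (synchronous merge) of conditional transition systems: if T₁ ≈ T₁' and T₂ ≈ T₂', then T₁ ∥ T₂ ≈ T₁' ∥ T₂'; moreover, the product relation R_∥ = {((s₁,s₂),(s₁',s₂')) : (s₁,s₁') ∈ R₁, (s₂,s₂') ∈ R₂} of witnessing bisimulations R₁, R₂ is itself a witnessing splitting bisimulation. -/
/-- A conditional transition system over a (complete) Boolean algebra `C` of
conditions and a set `Act` of actions: transition relations labelled by a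
condition and an action, termination relations labelled by a condition, and an
initial state. -/
structure CTS (C : Type*) (Act : Type*) (S : Type*) where
  tr : C → Act → S → S → Prop
  term : C → S → Prop
  init : S

/-- `B` is a splitting bisimulation between `T₁` and `T₂`. -/
def IsSB {C Act S₁ S₂ : Type*} [CompleteBooleanAlgebra C]
    (T₁ : CTS C Act S₁) (T₂ : CTS C Act S₂) (B : S₁ → S₂ → Prop) : Prop :=
  B T₁.init T₂.init ∧
  ∀ s₁ s₂, B s₁ s₂ →
    (∀ α a s₁', T₁.tr α a s₁ s₁' → ∃ CS : Set (C × S₂),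
      α ≤ sSup (Prod.fst '' CS) ∧ ∀ p ∈ CS, T₂.tr p.1 a s₂ p.2 ∧ B s₁' p.2) ∧
    (∀ α a s₂', T₂.tr α a s₂ s₂' → ∃ CS : Set (C × S₁),
      α ≤ sSup (Prod.fst '' CS) ∧ ∀ p ∈ CS, T₁.tr p.1 a s₁ p.2 ∧ B p.2 s₂') ∧
    (∀ α, T₁.term α s₁ → ∃ Cs : Set C,
      α ≤ sSup Cs ∧ ∀ α' ∈ Cs, T₂.term α' s₂) ∧
    (∀ α, T₂.term α s₂ → ∃ Cs : Set C,
      α ≤ sSup Cs ∧ ∀ α' ∈ Cs, T₁.term α' s₁)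

/-- Two conditional transition systems are splitting bisimilar if there exists
a splitting bisimulation between them. -/
def SBisim {C Act S₁ S₂ : Type*} [CompleteBooleanAlgebra C]
    (T₁ : CTS C Act S₁) (T₂ : CTS C Act S₂) : Prop :=
  ∃ B, IsSB T₁ T₂ B

/-- Parallel composition (synchronous merge) of conditional transition systems
with respect to a communication function `γ` on `Act_δ = Option Act`
(`none` playing the role of `δ`). -/
def parComp {C Act S₁ S₂ : Type*} [CompleteBooleanAlgebra C]
    (γ : Option Act → Option Act → Option Act)
    (T₁ : CTS C Act S₁) (T₂ : CTS C Act S₂) : CTS C Act (S₁ × S₂) where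
  tr α a s s' :=
    (T₁.tr α a s.1 s'.1 ∧ s'.2 = s.2) ∨
    (s'.1 = s.1 ∧ T₂.tr α a s.2 s'.2) ∨
    (∃ α' β' a' b', T₁.tr α' a' s.1 s'.1 ∧ T₂.tr β' b' s.2 s'.2 ∧
      γ (some a') (some b') = some a ∧ α = α' ⊓ β' ∧ α ≠ ⊥)
  term α s :=
    ∃ α' β', T₁.term α' s.1 ∧ T₂.term β' s.2 ∧ α = α' ⊓ β' ∧ α ≠ ⊥
  init := (T₁.init, T₂.init)

/-!
A matching family for a step of `T₁ ∥ T₂` is built componentwise. An interleaved step is matched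
by the family of the moving component, with the other component left in place. For a
synchronised step (or a joint termination) with condition `α ⊓ β`, match the two components by
families with joins `≥ α` and `≥ β`, and take all pairwise meets `c ⊓ d`. Complete Boolean
algebras are frames, so `⨆ c ⊓ ⨆ d = ⨆ (c ⊓ d)`, and the meets that are `⊥`, which `∥` does not
allow as conditions, contribute nothing to the join.
-/

theorem sSup_inf_sSup_le_of_inf_mem {C : Type*} [Order.Frame C] {A B T : Set C}
    (h : ∀ c ∈ A, ∀ d ∈ B, c ⊓ d ≠ ⊥ → c ⊓ d ∈ T) : sSup A ⊓ sSup B ≤ sSup T := by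
  rw [sSup_inf_sSup]
  refine iSup₂_le fun ⟨c, d⟩ ⟨hc, hd⟩ => ?_
  by_cases hcd : c ⊓ d = ⊥
  · exact hcd.le.trans bot_le
  · exact le_sSup (h c hc d hd hcd)

namespace CTS

variable {C Act S S₁ S₂ : Type*} [CompleteBooleanAlgebra C]

def MatchesTr (T : CTS C Act S) (α : C) (a : Act) (s : S) (P : S → Prop) : Prop :=
  ∃ CS : Set (C × S), α ≤ sSup (Prod.fst '' CS) ∧ ∀ p ∈ CS, T.tr p.1 a s p.2 ∧ P p.2

def MatchesTerm (T : CTS C Act S) (α : C) (s : S) : Prop :=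
  ∃ Cs : Set C, α ≤ sSup Cs ∧ ∀ α' ∈ Cs, T.term α' s

def IsSplitSim (T₁ : CTS C Act S₁) (T₂ : CTS C Act S₂) (B : S₁ → S₂ → Prop) : Prop :=
  ∀ s₁ s₂, B s₁ s₂ →
    (∀ α a s₁', T₁.tr α a s₁ s₁' → T₂.MatchesTr α a s₂ (B s₁')) ∧
    ∀ α, T₁.term α s₁ → T₂.MatchesTerm α s₂

theorem isSB_iff {T₁ : CTS C Act S₁} {T₂ : CTS C Act S₂} {B : S₁ → S₂ → Prop} :
    IsSB T₁ T₂ B ↔ B T₁.init T₂.init ∧ IsSplitSim T₁ T₂ B ∧ IsSplitSim T₂ T₁ (flip B) := by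
  refine and_congr_right fun _ => ⟨fun h => ⟨fun s₁ s₂ hB => ?_, fun s₂ s₁ hB => ?_⟩,
    fun ⟨hfw, hbw⟩ s₁ s₂ hB => ?_⟩
  · obtain ⟨htr, -, hterm, -⟩ := h s₁ s₂ hB
    exact ⟨htr, hterm⟩
  · obtain ⟨-, htr, -, hterm⟩ := h s₁ s₂ hB
    exact ⟨htr, hterm⟩
  · obtain ⟨htr, hterm⟩ := hfw s₁ s₂ hB
    obtain ⟨htr', hterm'⟩ := hbw s₂ s₁ hB
    exact ⟨htr, htr', hterm, hterm'⟩

variable {γ : Option Act → Option Act → Option Act} {T₁ : CTS C Act S₁} {T₂ : CTS C Act S₂}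
  {α β : C} {a : Act} {s₁ : S₁} {s₂ : S₂} {P : S₁ → Prop} {Q : S₂ → Prop}

theorem MatchesTr.parComp_left (h : T₁.MatchesTr α a s₁ P) (hQ : Q s₂) :
    (parComp γ T₁ T₂).MatchesTr α a (s₁, s₂) fun q => P q.1 ∧ Q q.2 := by
  obtain ⟨CS, hle, hCS⟩ := h
  refine ⟨Prod.map id (·, s₂) '' CS, by rwa [Set.image_image], ?_⟩
  rintro _ ⟨p, hp, rfl⟩
  exact ⟨Or.inl ⟨(hCS p hp).1, rfl⟩, (hCS p hp).2, hQ⟩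

theorem MatchesTr.parComp_right (hP : P s₁) (h : T₂.MatchesTr α a s₂ Q) :
    (parComp γ T₁ T₂).MatchesTr α a (s₁, s₂) fun q => P q.1 ∧ Q q.2 := by
  obtain ⟨CS, hle, hCS⟩ := h
  refine ⟨Prod.map id (s₁, ·) '' CS, by rwa [Set.image_image], ?_⟩
  rintro _ ⟨p, hp, rfl⟩
  exact ⟨Or.inr (Or.inl ⟨rfl, (hCS p hp).1⟩), hP, (hCS p hp).2⟩

theorem MatchesTr.parComp_sync {a' b' : Act} (h₁ : T₁.MatchesTr α a' s₁ P)
    (h₂ : T₂.MatchesTr β b' s₂ Q) (hγ : γ (some a') (some b') = some a) :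
    (parComp γ T₁ T₂).MatchesTr (α ⊓ β) a (s₁, s₂) fun q => P q.1 ∧ Q q.2 := by
  obtain ⟨CS₁, hle₁, hCS₁⟩ := h₁
  obtain ⟨CS₂, hle₂, hCS₂⟩ := h₂
  refine ⟨{p | ∃ x ∈ CS₁, ∃ y ∈ CS₂, x.1 ⊓ y.1 ≠ ⊥ ∧ p = (x.1 ⊓ y.1, (x.2, y.2))},
    (inf_le_inf hle₁ hle₂).trans (sSup_inf_sSup_le_of_inf_mem ?_), ?_⟩
  · rintro _ ⟨x, hx, rfl⟩ _ ⟨y, hy, rfl⟩ hxy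
    exact ⟨_, ⟨x, hx, y, hy, hxy, rfl⟩, rfl⟩
  · rintro _ ⟨x, hx, y, hy, hxy, rfl⟩
    exact ⟨Or.inr (Or.inr ⟨x.1, y.1, a', b', (hCS₁ x hx).1, (hCS₂ y hy).1, hγ, rfl, hxy⟩),
      (hCS₁ x hx).2, (hCS₂ y hy).2⟩

theorem MatchesTerm.parComp (h₁ : T₁.MatchesTerm α s₁) (h₂ : T₂.MatchesTerm β s₂) :
    (parComp γ T₁ T₂).MatchesTerm (α ⊓ β) (s₁, s₂) := by
  obtain ⟨Cs₁, hle₁, hCs₁⟩ := h₁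
  obtain ⟨Cs₂, hle₂, hCs₂⟩ := h₂
  refine ⟨{e | ∃ c ∈ Cs₁, ∃ d ∈ Cs₂, c ⊓ d ≠ ⊥ ∧ e = c ⊓ d},
    (inf_le_inf hle₁ hle₂).trans (sSup_inf_sSup_le_of_inf_mem ?_), ?_⟩
  · exact fun c hc d hd hcd => ⟨c, hc, d, hd, hcd, rfl⟩
  · rintro _ ⟨c, hc, d, hd, hcd, rfl⟩
    exact ⟨c, d, hCs₁ c hc, hCs₂ d hd, rfl, hcd⟩

theorem IsSplitSim.parComp {S₁' S₂' : Type*} {T₁' : CTS C Act S₁'} {T₂' : CTS C Act S₂'}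
    {R₁ : S₁ → S₁' → Prop} {R₂ : S₂ → S₂' → Prop}
    (h₁ : IsSplitSim T₁ T₁' R₁) (h₂ : IsSplitSim T₂ T₂' R₂) :
    IsSplitSim (parComp γ T₁ T₂) (parComp γ T₁' T₂') fun p q => R₁ p.1 q.1 ∧ R₂ p.2 q.2 := by
  rintro ⟨s₁, s₂⟩ ⟨s₁', s₂'⟩ ⟨hR₁, hR₂⟩
  obtain ⟨htr₁, hterm₁⟩ := h₁ s₁ s₁' hR₁
  obtain ⟨htr₂, hterm₂⟩ := h₂ s₂ s₂' hR₂
  refine ⟨?_, ?_⟩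
  · rintro α a ⟨t₁, t₂⟩ (⟨ht, rfl⟩ | ⟨rfl, ht⟩ | ⟨α', β', a', b', ht₁, ht₂, hγ, rfl, -⟩)
    · exact (htr₁ α a t₁ ht).parComp_left hR₂
    · exact (htr₂ α a t₂ ht).parComp_right hR₁
    · exact (htr₁ α' a' t₁ ht₁).parComp_sync (htr₂ β' b' t₂ ht₂) hγ
  · rintro α ⟨α', β', ht₁, ht₂, rfl, -⟩
    exact (hterm₁ α' ht₁).parComp (hterm₂ β' ht₂)

end CTS

theorem sbisim_congr_parComp_general {C Act S₁ S₂ S₁' S₂' : Type*}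
    [CompleteBooleanAlgebra C]
    (γ : Option Act → Option Act → Option Act)
    (T₁ : CTS C Act S₁) (T₂ : CTS C Act S₂)
    (T₁' : CTS C Act S₁') (T₂' : CTS C Act S₂')
    (R₁ : S₁ → S₁' → Prop) (R₂ : S₂ → S₂' → Prop)
    (h₁ : IsSB T₁ T₁' R₁) (h₂ : IsSB T₂ T₂' R₂) :
    IsSB (parComp γ T₁ T₂) (parComp γ T₁' T₂')
      (fun p q => R₁ p.1 q.1 ∧ R₂ p.2 q.2) ∧
    SBisim (parComp γ T₁ T₂) (parComp γ T₁' T₂') := by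
  obtain ⟨hinit₁, hfw₁, hbw₁⟩ := CTS.isSB_iff.mp h₁
  obtain ⟨hinit₂, hfw₂, hbw₂⟩ := CTS.isSB_iff.mp h₂
  have hprod : IsSB (parComp γ T₁ T₂) (parComp γ T₁' T₂')
      (fun p q => R₁ p.1 q.1 ∧ R₂ p.2 q.2) :=
    CTS.isSB_iff.mpr ⟨⟨hinit₁, hinit₂⟩, hfw₁.parComp hfw₂, hbw₁.parComp hbw₂⟩
  exact ⟨hprod, _, hprod⟩

/-- Splitting bisimilarity is a congruence with respect to parallel
composition; moreover, the product of witnessing splitting bisimulations is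
itself a witnessing splitting bisimulation. -/
theorem sbisim_congr_parComp {C Act S₁ S₂ S₁' S₂' : Type*}
    [CompleteBooleanAlgebra C]
    (γ : Option Act → Option Act → Option Act)
    (hγcomm : ∀ a b, γ a b = γ b a)
    (hγassoc : ∀ a b c, γ (γ a b) c = γ a (γ b c))
    (hγδ : ∀ a, γ none a = none)
    (T₁ : CTS C Act S₁) (T₂ : CTS C Act S₂)
    (T₁' : CTS C Act S₁') (T₂' : CTS C Act S₂')
    (R₁ : S₁ → S₁' → Prop) (R₂ : S₂ → S₂' → Prop)
    (h₁ : IsSB T₁ T₁' R₁) (h₂ : IsSB T₂ T₂' R₂) :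
    IsSB (parComp γ T₁ T₂) (parComp γ T₁' T₂')
      (fun p q => R₁ p.1 q.1 ∧ R₂ p.2 q.2) ∧
    SBisim (parComp γ T₁ T₂) (parComp γ T₁' T₂') :=
  sbisim_congr_parComp_general γ T₁ T₂ T₁' T₂' R₁ R₂ h₁ h₂
end

section
/- From the axioms of BPA with the empty process, guarded commands, retrospection, and last action conditions (in particular axiom J: a·x = a·(just_a :→ x), axiom A4, and R6'), the equation a·x + b·y = (a + b)·(just_a :→ x + just_b :→ y) is derivable for distinct actions a, b. -/
/-- A model of the equational theory ACPε_c restricted to the constants and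
operators of BPA with the empty process, guarded commands, and conditions
forming a Boolean algebra, together with the axioms A1–A9, GC1–GC7 and
BA1–BA8. By Birkhoff's completeness theorem, an equation is derivable from
these axioms iff it holds in every such model. -/
structure ACPecAlg (P : Type*) (C : Type*) where
  add : P → P → P
  seq : P → P → P
  gc : C → P → P
  dead : P
  eps : P
  bot : C
  top : C
  compl : C → C
  join : C → C → C
  meet : C → C → C
  A1 : ∀ x y, add x y = add y x
  A2 : ∀ x y z, add (add x y) z = add x (add y z)
  A3 : ∀ x, add x x = x
  A4 : ∀ x y z, seq (add x y) z = add (seq x z) (seq y z)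
  A5 : ∀ x y z, seq (seq x y) z = seq x (seq y z)
  A6 : ∀ x, add x dead = x
  A7 : ∀ x, seq dead x = dead
  A8 : ∀ x, seq x eps = x
  A9 : ∀ x, seq eps x = x
  GC1 : ∀ x, gc top x = x
  GC2 : ∀ x, gc bot x = dead
  GC3 : ∀ φ, gc φ dead = dead
  GC4 : ∀ φ x y, gc φ (add x y) = add (gc φ x) (gc φ y)
  GC5 : ∀ φ x y, gc φ (seq x y) = seq (gc φ x) y
  GC6 : ∀ φ ψ x, gc φ (gc ψ x) = gc (meet φ ψ) x
  GC7 : ∀ φ ψ x, gc (join φ ψ) x = add (gc φ x) (gc ψ x)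
  BA1 : ∀ φ, join φ bot = φ
  BA2 : ∀ φ, join φ (compl φ) = top
  BA3 : ∀ φ ψ, join φ ψ = join ψ φ
  BA4 : ∀ φ ψ χ, join φ (meet ψ χ) = meet (join φ ψ) (join φ χ)
  BA5 : ∀ φ, meet φ top = φ
  BA6 : ∀ φ, meet φ (compl φ) = bot
  BA7 : ∀ φ ψ, meet φ ψ = meet ψ φ
  BA8 : ∀ φ ψ χ, meet φ (join ψ χ) = join (meet φ ψ) (meet φ χ)

/-- The conditional `p ⊲ φ ⊳ q`, an abbreviation for `φ :→ p + ¬φ :→ q`. -/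
def ACPecAlg.cond {P C : Type*} (A : ACPecAlg P C) (p : P) (φ : C) (q : P) : P :=
  A.add (A.gc φ p) (A.gc (A.compl φ) q)

/-- A model of ACPε_cr: a model of ACPε_c together with a retrospection
operator on conditions satisfying R1–R5. -/
structure ACPecrAlg (P : Type*) (C : Type*) extends ACPecAlg P C where
  retro : C → C
  R1 : retro bot = bot
  R2 : retro top = top
  R3 : ∀ φ, retro (compl φ) = compl (retro φ)
  R4 : ∀ φ ψ, retro (join φ ψ) = join (retro φ) (retro ψ)
  R5 : ∀ φ ψ, retro (meet φ ψ) = meet (retro φ) (retro ψ)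

namespace ACPecAlg

variable {P C : Type*} (A : ACPecAlg P C)

theorem meet_self (φ : C) : A.meet φ φ = φ := by
  calc A.meet φ φ = A.join (A.meet φ φ) (A.meet φ (A.compl φ)) := by rw [A.BA6, A.BA1]
    _ = A.meet φ (A.join φ (A.compl φ)) := (A.BA8 _ _ _).symm
    _ = φ := by rw [A.BA2, A.BA5]

theorem gc_gc_self (φ : C) (x : P) : A.gc φ (A.gc φ x) = A.gc φ x := by
  rw [A.GC6, A.meet_self]

theorem gc_gc_of_meet_eq_bot {φ ψ : C} (h : A.meet φ ψ = A.bot) (x : P) :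
    A.gc φ (A.gc ψ x) = A.dead := by
  rw [A.GC6, h, A.GC2]

theorem gc_add_gc_of_meet_eq_bot {φ ψ : C} (h : A.meet φ ψ = A.bot) (x y : P) :
    A.gc φ (A.add (A.gc φ x) (A.gc ψ y)) = A.gc φ x := by
  rw [A.GC4, A.gc_gc_self, A.gc_gc_of_meet_eq_bot h, A.A6]

variable {A}

theorem seq_add_gc_of_meet_eq_bot {a : P} {φ ψ : C}
    (J : ∀ x, A.seq a x = A.seq a (A.gc φ x)) (h : A.meet φ ψ = A.bot) (x y : P) :
    A.seq a (A.add (A.gc φ x) (A.gc ψ y)) = A.seq a x := by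
  rw [J, A.gc_add_gc_of_meet_eq_bot h, ← J]

end ACPecAlg

theorem acpecr_last_action_general {P C : Type*} (A : ACPecrAlg P C)
    (a b : P) (justa justb : C)
    (hincomp : A.meet justa justb = A.bot)
    (Ja : ∀ x, A.seq a x = A.seq a (A.gc justa x))
    (Jb : ∀ x, A.seq b x = A.seq b (A.gc justb x))
    (x y : P) :
    A.add (A.seq a x) (A.seq b y) =
      A.seq (A.add a b) (A.add (A.gc justa x) (A.gc justb y)) := by
  have hincomp' : A.meet justb justa = A.bot := (A.BA7 _ _).trans hincomp
  rw [A.A4, A.seq_add_gc_of_meet_eq_bot Ja hincomp, A.A1 (A.gc justa x),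
    A.seq_add_gc_of_meet_eq_bot Jb hincomp']

/-- From the axioms of BPA with the empty process, guarded commands,
retrospection and last action conditions — in particular axiom J
(`a·x = a·(just_a :→ x)`), axiom A4, and the derived law R6' — the equation
`a·x + b·y = (a + b)·(just_a :→ x + just_b :→ y)` is derivable for distinct
actions `a`, `b` (whose last action conditions are incompatible:
`just_a ∧ just_b = ⊥`). -/
theorem acpecr_last_action {P C : Type*} (A : ACPecrAlg P C)
    (a b : P) (justa justb : C)
    (hab : a ≠ b)
    (hincomp : A.meet justa justb = A.bot)
    (Ja : ∀ x, A.seq a x = A.seq a (A.gc justa x))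
    (Jb : ∀ x, A.seq b x = A.seq b (A.gc justb x))
    (R6'a : ∀ φ x y, A.seq a (A.cond x (A.retro φ) y) =
      A.cond (A.seq a x) φ (A.seq a y))
    (R6'b : ∀ φ x y, A.seq b (A.cond x (A.retro φ) y) =
      A.cond (A.seq b x) φ (A.seq b y))
    (x y : P) :
    A.add (A.seq a x) (A.seq b y) =
      A.seq (A.add a b) (A.add (A.gc justa x) (A.gc justb y)) :=
  acpecr_last_action_general A a b justa justb hincomp Ja Jb x y
end
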